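/- Adaptive power method fixed point: let A = diag(2,1) and suppose the iteration Y^{i} = dual_∞(A X^{i−1}), X^{i} = dual_2(A^⊤ Y^{i}) reaches X^1 = ±(0,1)^⊤. Then X^i = Y^i = ±(0,1)^⊤ for all i ≥ 1, and the returned estimate ||A X^m||_∞ = 1, whereas ||A||_{2→∞} = 2. -/

import Mathlib

open scoped BigOperators

/-- `dual₂(x) = x / ‖x‖₂` on ℝ². -/
noncomputable def dualTwo (x : Fin 2 → ℝ) : Fin 2 → ℝ :=
  (Real.sqrt ((x 0) ^ 2 + (x 1) ^ 2))⁻¹ • x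

/-- `dual_∞(x) = |I|⁻¹ sign(x) ⊙ 1_I` on ℝ², where
`I = {i : |x_i| = ‖x‖_∞}`. -/
noncomputable def dualInf (x : Fin 2 → ℝ) : Fin 2 → ℝ := fun i =>
  if |x i| = max |x 0| |x 1| then
    Real.sign (x i) /
      ((Finset.univ.filter fun j : Fin 2 => |x j| = max |x 0| |x 1|).card : ℝ)
  else 0

/-- The matrix `A = diag(2,1)`. -/
noncomputable def Adiag : Matrix (Fin 2) (Fin 2) ℝ := Matrix.diagonal ![2, 1]

open Matrix

/-! The vector `±e₂` is a fixed point of one step `x ↦ dual₂ (Aᵀ dual_∞ (A x))`: since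
`A e₂ = e₂` has its maximal modulus in the second coordinate, `dual_∞` returns it unchanged,
and so does `dual₂`. Hence the iteration never leaves `±e₂`, and its estimate `‖A e₂‖_∞ = 1`
misses the largest row norm `2` of `A`. -/

theorem dualTwo_eq_self {x : Fin 2 → ℝ} (hx : x 0 ^ 2 + x 1 ^ 2 = 1) : dualTwo x = x := by
  simp [dualTwo, hx]

theorem dualInf_of_abs_lt {x : Fin 2 → ℝ} (hx : |x 0| < |x 1|) :
    dualInf x = ![0, Real.sign (x 1)] := by
  have hmax : max |x 0| |x 1| = |x 1| := max_eq_right hx.le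
  have hI : (Finset.univ.filter fun j : Fin 2 => |x j| = |x 1|) = {1} := by
    ext j
    fin_cases j <;> simp [hx.ne]
  funext i
  fin_cases i <;> simp [dualInf, hmax, hI, hx.ne]

theorem Adiag_mulVec (x : Fin 2 → ℝ) : Adiag *ᵥ x = ![2 * x 0, x 1] := by
  funext i
  fin_cases i <;> simp [Adiag, mulVec_diagonal]

theorem Adiag_transpose : Adiagᵀ = Adiag := diagonal_transpose _

theorem sqrt_sum_sq_diagonal_apply {n : Type*} [Fintype n] [DecidableEq n] (d : n → ℝ) (i : n) :
    Real.sqrt (∑ j, diagonal d i j ^ 2) = |d i| := by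
  rw [Finset.sum_eq_single i (fun j _ hj => by simp [diagonal_apply_ne _ hj.symm]) (by simp),
    diagonal_apply_eq, Real.sqrt_sq_eq_abs]

theorem iSup_sqrt_sum_sq_Adiag : (⨆ i : Fin 2, Real.sqrt (∑ j, Adiag i j ^ 2)) = 2 := by
  have hrow : ∀ i, Real.sqrt (∑ j, Adiag i j ^ 2) = |(![2, 1] : Fin 2 → ℝ) i| :=
    sqrt_sum_sq_diagonal_apply _
  simp only [hrow]
  refine IsGreatest.csSup_eq ⟨⟨0, by simp⟩, ?_⟩
  rintro _ ⟨i, rfl⟩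
  fin_cases i <;> norm_num

theorem eq_fixedPt_of_recurrence {α : Type*} {f : α → α} {p : α} (hp : f p = p) {x : ℕ → α} {n : ℕ}
    (hn : x n = p) (hrec : ∀ i, n ≤ i → x (i + 1) = f (x i)) : ∀ i, n ≤ i → x i = p := by
  intro i hi
  induction i, hi using Nat.le_induction with
  | base => exact hn
  | succ i hi ih => rw [hrec i hi, ih, hp]

noncomputable def powerStep (x : Fin 2 → ℝ) : Fin 2 → ℝ :=
  dualTwo (Adiagᵀ *ᵥ dualInf (Adiag *ᵥ x))

theorem dualInf_Adiag_mulVec_e₂ {s : ℝ} (hs : s = 1 ∨ s = -1) :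
    dualInf (Adiag *ᵥ ![0, s]) = ![0, s] := by
  have hsign : Real.sign s = s := by rcases hs with rfl | rfl <;> simp [Real.sign_neg]
  rw [Adiag_mulVec, dualInf_of_abs_lt (by simp [(abs_eq zero_le_one).2 hs])]
  simp [hsign]

theorem powerStep_e₂ {s : ℝ} (hs : s = 1 ∨ s = -1) : powerStep ![0, s] = ![0, s] := by
  have hsq : s ^ 2 = 1 := by rcases hs with rfl | rfl <;> norm_num
  rw [powerStep, dualInf_Adiag_mulVec_e₂ hs, Adiag_transpose, Adiag_mulVec,
    dualTwo_eq_self (by simp [hsq])]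
  simp

/-- Adaptive power method fixed point for `A = diag(2,1)`: if the iteration
`Yⁱ = dual_∞(A Xⁱ⁻¹)`, `Xⁱ = dual₂(Aᵀ Yⁱ)` reaches `X¹ = ±(0,1)ᵀ`, then
`Xⁱ = Yⁱ = ±(0,1)ᵀ` for all `i ≥ 1`, the returned estimate `‖A Xᵐ‖_∞ = 1`,
whereas `‖A‖_{2→∞} = 2`. -/
theorem adaptive_power_method_trapped (s : ℝ) (hs : s = 1 ∨ s = -1)
    (Xseq : ℕ → Fin 2 → ℝ)
    (hX1 : Xseq 1 = ![0, s])
    (hrec : ∀ i, 1 ≤ i →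
      Xseq (i + 1) = dualTwo (Adiag.transpose.mulVec (dualInf (Adiag.mulVec (Xseq i))))) :
    (∀ i, 1 ≤ i → Xseq i = ![0, s]) ∧
    (∀ i, 1 ≤ i → dualInf (Adiag.mulVec (Xseq i)) = ![0, s]) ∧
    (∀ m, 1 ≤ m → max |Adiag.mulVec (Xseq m) 0| |Adiag.mulVec (Xseq m) 1| = 1) ∧
    (⨆ i : Fin 2, Real.sqrt (∑ j, (Adiag i j) ^ 2)) = 2 := by
  have hX : ∀ i, 1 ≤ i → Xseq i = ![0, s] :=
    eq_fixedPt_of_recurrence (f := powerStep) (powerStep_e₂ hs) hX1 hrec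
  refine ⟨hX, fun i hi => ?_, fun m hm => ?_, iSup_sqrt_sum_sq_Adiag⟩
  · rw [hX i hi, dualInf_Adiag_mulVec_e₂ hs]
  · rw [hX m hm, Adiag_mulVec]
    simp [(abs_eq zero_le_one).2 hs]
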